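/- Let v and w be homotopy strings or homotopy bands over the gentle algebra Λ, and suppose in the unfolded diagrams of Q_v above Q_w there is a vertical non-stationary path f_C flanked on the left by letters v_L (of v) and w_L (of w) and on the right by letters v_R and w_R, where v_L is direct if and only if w_L is direct and v_R is direct if and only if w_R is direct, and where the left-hand square (with some path f_L) and the right-hand square (with some path f_R) both commute. Then at most one of the two squares has a non-zero commutativity relation: the composites in at least one of the two squares are zero. -/
import Mathlib

/-- If `[a, b]` is an infix of `p ++ q`, then it is an infix of `p`, or of `q`, or it
straddles the boundary: `a` is the last element of `p` and `b` the first of `q`. -/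
lemma GentleBoundQuiver.straddle {α : Type*} {p q : List α} {a b : α}
    (h : [a, b] <:+: p ++ q) :
    [a, b] <:+: p ∨ [a, b] <:+: q ∨ (p.getLast? = some a ∧ q.head? = some b) := by
  obtain ⟨s, t, hst⟩ := h
  rw [List.append_assoc] at hst
  rcases List.append_eq_append_iff.mp hst.symm with ⟨u, hu1, hu2⟩ | ⟨u, hu1, hu2⟩
  · right; left
    exact ⟨u, t, by rw [hu2, List.append_assoc]⟩
  · rcases List.append_eq_append_iff.mp hu2 with ⟨v, hv1, hv2⟩ | ⟨v, hv1, hv2⟩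
    · left
      exact ⟨s, v, by rw [hu1, hv1, List.append_assoc]⟩
    · match u, hv1 with
      | [], h' =>
        right; left
        refine ⟨[], t, ?_⟩
        have h'' : [a, b] = v := h'
        simp only [List.nil_append]
        rw [hv2, ← h'']
      | [x], h' =>
        injection h' with h1 h2
        have h2' : [b] = v := h2
        right; right
        constructor
        · rw [hu1, ← h1, List.getLast?_concat]
        · rw [hv2, ← h2']; rfl
      | [x, y], h' =>
        injection h' with h1 h2
        injection h2 with h2 h3
        left
        exact ⟨s, [], by rw [hu1, ← h1, ← h2]; simp⟩
      | x :: y :: z :: l, h' => simp at h'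


/-- A finite quiver `Γ` together with a set `rel` of zero-relations of length two (the
generators of the ideal `I` of the path algebra `kΓ`), satisfying the *gentle* conditions:
at every vertex at most two arrows start and at most two arrows end; for each arrow `a`
there is at most one arrow `b` such that the composition "`a` then `b`" avoids `I` and at
most one arrow `c` such that "`c` then `a`" avoids `I`; and at most one arrow `b` with
"`a` then `b`" in `I` and at most one arrow `c` with "`c` then `a`" in `I`.  Paths are
recorded as lists of arrows in traversal order, and `(a, b) ∈ rel` encodes the length-two
path "`a` followed by `b`". -/
structure GentleBoundQuiver where
  /-- vertices of the quiver -/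
  V : Type
  /-- arrows of the quiver -/
  A : Type
  [instFintypeV : Fintype V]
  [instFintypeA : Fintype A]
  src : A → V
  tgt : A → V
  /-- the generating set of length-two relations of the ideal `I` -/
  rel : Set (A × A)
  rel_composable : ∀ p ∈ rel, tgt p.1 = src p.2
  at_most_two_start : ∀ x : V, {a : A | src a = x}.encard ≤ 2
  at_most_two_end : ∀ x : V, {a : A | tgt a = x}.encard ≤ 2
  unique_nonrel_succ : ∀ a : A, {b : A | tgt a = src b ∧ (a, b) ∉ rel}.Subsingleton
  unique_nonrel_pred : ∀ a : A, {c : A | tgt c = src a ∧ (c, a) ∉ rel}.Subsingleton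
  unique_rel_succ : ∀ a : A, {b : A | (a, b) ∈ rel}.Subsingleton
  unique_rel_pred : ∀ a : A, {c : A | (c, a) ∈ rel}.Subsingleton

namespace GentleBoundQuiver

variable (Q : GentleBoundQuiver)

/-- `l` is a non-stationary path from `x` to `y` in the quiver (arrows listed in traversal
order). -/
def IsPathFrom (x y : Q.V) (l : List Q.A) : Prop :=
  l ≠ [] ∧ l.Chain' (fun a b => Q.tgt a = Q.src b) ∧
    (∀ a ∈ l.head?, Q.src a = x) ∧ (∀ a ∈ l.getLast?, Q.tgt a = y)

/-- the path contains a subpath lying in `I`, i.e. it is zero in `Λ = kΓ/I` -/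
def ContainsRel (l : List Q.A) : Prop := ∃ a b, (a, b) ∈ Q.rel ∧ [a, b] <:+: l

/-- the underlying path of a (non-trivial) homotopy letter from `x` to `y`: a non-stationary
path with no subpath in `I` -/
def IsLetter (x y : Q.V) (l : List Q.A) : Prop := Q.IsPathFrom x y l ∧ ¬Q.ContainsRel l

/-- a possibly stationary path from `x` to `y` -/
def IsPathOpt (x y : Q.V) (l : List Q.A) : Prop := (l = [] ∧ x = y) ∨ Q.IsPathFrom x y l

/-- two (composable) paths are equal as elements of `Λ = kΓ/I`: either they are equal as
paths, or both contain a subpath in `I` (i.e. both are zero in `Λ`) -/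
def EqLambda (p q : List Q.A) : Prop := p = q ∨ (Q.ContainsRel p ∧ Q.ContainsRel q)

/-- the conditions imposed by the definition of a homotopy string on a consecutive pair of
homotopy letters around their common vertex: `lL` is the left letter with orientation `dL`
and `lR` the right letter with orientation `dR` in the unfolded diagram (`true` = direct,
i.e. pointing to the right).  Two consecutive direct letters must compose to a path with a
subpath in `I` (dually for two inverse letters); a direct letter followed by an inverse one
must not start with the same arrow; an inverse letter followed by a direct one must not end
with the same arrow.  (Recall that the composite of the unfolded-diagram arrows `p` followed
by `q` corresponds to the concatenated traversal list `l_q ++ l_p`.) -/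
def ConsecutiveLetters (dL dR : Bool) (lL lR : List Q.A) : Prop :=
  match dL, dR with
  | true, true => Q.ContainsRel (lR ++ lL)
  | false, false => Q.ContainsRel (lL ++ lR)
  | true, false => lL.head? ≠ lR.head?
  | false, true => lL.getLast? ≠ lR.getLast?

/-- If the last arrow of `p` and the first arrow of `q` form a relation, then `p ++ q`
contains a relation. -/
lemma containsRel_boundary {p q : List Q.A} {a b : Q.A}
    (hp : p.getLast? = some a) (hq : q.head? = some b) (h : (a, b) ∈ Q.rel) :
    Q.ContainsRel (p ++ q) := by
  obtain ⟨p', hp'⟩ : ∃ p', p = p' ++ [a] := by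
    rcases List.eq_nil_or_concat p with rfl | ⟨p', c, rfl⟩
    · simp at hp
    · rw [List.concat_eq_append] at hp ⊢
      rw [List.getLast?_concat] at hp
      injection hp with h'
      exact ⟨p', by rw [h']⟩
  obtain ⟨q', hq'⟩ : ∃ q', q = b :: q' := by
    cases q with
    | nil => simp at hq
    | cons c q' =>
      injection hq with h'
      exact ⟨q', by rw [h']⟩
  exact ⟨a, b, h, p', q', by rw [hp', hq']; simp⟩

/-- **Lemma 4.1.**  Consider the unfolded diagrams of `Q_v` above `Q_w`, with top vertices
carrying the projectives at the quiver vertices `xL, xC, xR` and bottom vertices at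
`yL, yC, yR`; a vertical non-stationary path `f_C` (diagram arrow from the top centre to the
bottom centre) flanked on the left by the homotopy letters `v_L` (of `v`) and `w_L` (of `w`),
and on the right by `v_R` and `w_R`, where `v_L` is direct iff `w_L` is direct (common
orientation bit `dL`) and `v_R` is direct iff `w_R` is direct (bit `dR`); and paths `f_L`,
`f_R` closing the left-hand square `(*)` and the right-hand square `(**)`.  If both squares
commute (in `Λ`), then at most one of the two squares has a non-zero commutativity relation:
the (common) composite in at least one of the two squares is zero in `Λ`, i.e. contains a
subpath in `I`. -/
theorem at_most_one_nonzero_commutativity_relation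
    (xL xC xR yL yC yR : Q.V) (dL dR : Bool)
    (lvL lvR lwL lwR lfC lfL lfR : List Q.A)
    (hvL : Q.IsLetter (if dL then xC else xL) (if dL then xL else xC) lvL)
    (hwL : Q.IsLetter (if dL then yC else yL) (if dL then yL else yC) lwL)
    (hvR : Q.IsLetter (if dR then xR else xC) (if dR then xC else xR) lvR)
    (hwR : Q.IsLetter (if dR then yR else yC) (if dR then yC else yR) lwR)
    (hfC : Q.IsLetter yC xC lfC)
    (hfL : Q.IsPathOpt yL xL lfL)
    (hfR : Q.IsPathOpt yR xR lfR)
    (hv : Q.ConsecutiveLetters dL dR lvL lvR)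
    (hw : Q.ConsecutiveLetters dL dR lwL lwR)
    (hcommL : Q.EqLambda (if dL then lfC ++ lvL else lfL ++ lvL)
      (if dL then lwL ++ lfL else lwL ++ lfC))
    (hcommR : Q.EqLambda (if dR then lfR ++ lvR else lfC ++ lvR)
      (if dR then lwR ++ lfC else lwR ++ lfR)) :
    Q.ContainsRel (if dL then lfC ++ lvL else lfL ++ lvL) ∨
      Q.ContainsRel (if dR then lfR ++ lvR else lfC ++ lvR) := by
  have hvLne : lvL ≠ [] := hvL.1.1
  have hvRne : lvR ≠ [] := hvR.1.1
  have hwLne : lwL ≠ [] := hwL.1.1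
  have hwRne : lwR ≠ [] := hwR.1.1
  have hfCne : lfC ≠ [] := hfC.1.1
  cases dL <;> cases dR <;>
    simp only [if_true, if_false, Bool.false_eq_true, reduceIte] at hcommL hcommR ⊢
  · -- dL = false, dR = false
    have hv' : Q.ContainsRel (lvL ++ lvR) := hv
    rcases hcommL with heq | ⟨h1, _⟩
    · right
      obtain ⟨a, b, hab, hin⟩ := hv'
      rcases straddle hin with h | h | ⟨ha, hb⟩
      · exact absurd ⟨a, b, hab, h⟩ hvL.2
      · exact absurd ⟨a, b, hab, h⟩ hvR.2
      · have h3 : (lfL ++ lvL).getLast? = (lwL ++ lfC).getLast? := by rw [heq]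
        rw [List.getLast?_append_of_ne_nil lfL hvLne,
          List.getLast?_append_of_ne_nil lwL hfCne] at h3
        exact Q.containsRel_boundary (h3.symm.trans ha) hb hab
    · exact Or.inl h1
  · -- dL = false, dR = true
    have hv' : lvL.getLast? ≠ lvR.getLast? := hv
    rcases hcommL with heqL | ⟨h1, _⟩
    · rcases hcommR with heqR | ⟨h1, _⟩
      · exfalso
        have e1 : lvL.getLast? = lfC.getLast? := by
          have := congrArg List.getLast? heqL
          rwa [List.getLast?_append_of_ne_nil lfL hvLne,
            List.getLast?_append_of_ne_nil lwL hfCne] at this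
        have e2 : lvR.getLast? = lfC.getLast? := by
          have := congrArg List.getLast? heqR
          rwa [List.getLast?_append_of_ne_nil lfR hvRne,
            List.getLast?_append_of_ne_nil lwR hfCne] at this
        exact hv' (e1.trans e2.symm)
      · exact Or.inr h1
    · exact Or.inl h1
  · -- dL = true, dR = false
    have hw' : lwL.head? ≠ lwR.head? := hw
    rcases hcommL with heqL | ⟨h1, _⟩
    · rcases hcommR with heqR | ⟨h1, _⟩
      · exfalso
        have e1 : lfC.head? = lwL.head? := by
          have := congrArg List.head? heqL
          rwa [List.head?_append_of_ne_nil lfC hfCne,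
            List.head?_append_of_ne_nil lwL hwLne] at this
        have e2 : lfC.head? = lwR.head? := by
          have := congrArg List.head? heqR
          rwa [List.head?_append_of_ne_nil lfC hfCne,
            List.head?_append_of_ne_nil lwR hwRne] at this
        exact hw' (e1.symm.trans e2)
      · exact Or.inr h1
    · exact Or.inl h1
  · -- dL = true, dR = true
    have hv' : Q.ContainsRel (lvR ++ lvL) := hv
    rcases hcommR with heq | ⟨h1, _⟩
    · left
      obtain ⟨a, b, hab, hin⟩ := hv'
      rcases straddle hin with h | h | ⟨ha, hb⟩
      · exact absurd ⟨a, b, hab, h⟩ hvR.2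
      · exact absurd ⟨a, b, hab, h⟩ hvL.2
      · have h3 : (lfR ++ lvR).getLast? = (lwR ++ lfC).getLast? := by rw [heq]
        rw [List.getLast?_append_of_ne_nil lfR hvRne,
          List.getLast?_append_of_ne_nil lwR hfCne] at h3
        exact Q.containsRel_boundary (h3.symm.trans ha) hb hab
    · exact Or.inr h1

end GentleBoundQuiver
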